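/- Let A = C*(x_1,...,x_n) be a finitely generated unital MF C*-algebra. If K_top^(2)(x_1,...,x_n) = 0 (this value being independent of the generating tuple), then K_top^(3)(A) = 0. -/

import Mathlib

noncomputable section

open Filter Set
open scoped BigOperators ComplexOrder

namespace OrbitDim

/-- `k × k` complex matrices. -/
abbrev Mat (k : ℕ) := Matrix (Fin k) (Fin k) ℂ

/-- The operator norm of a complex matrix, i.e. the norm of the operator it induces
on the euclidean space `ℂ^k`. -/
def opNorm {k : ℕ} (M : Mat k) : ℝ := ‖Matrix.toEuclideanCLM (𝕜 := ℂ) M‖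

/-- The square of the normalized Hilbert–Schmidt norm `‖M‖₂² = τ_k(M*M)`. -/
def hsNormSq {k : ℕ} (M : Mat k) : ℝ := (k : ℝ)⁻¹ * ∑ s, ∑ t, ‖M s t‖ ^ 2

/-- The normalized Hilbert–Schmidt norm `‖M‖₂ = τ_k(M*M)^{1/2}`. -/
def hsNorm {k : ℕ} (M : Mat k) : ℝ := Real.sqrt (hsNormSq M)

/-- `‖·‖₂` of a tuple of matrices. -/
def tupleHS {ι : Type*} [Fintype ι] {k : ℕ} (T : ι → Mat k) : ℝ :=
  Real.sqrt (∑ i, hsNormSq (T i))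

/-- The normalized trace `τ_k = (1/k) Tr`. -/
def normalizedTrace {k : ℕ} (M : Mat k) : ℂ := (k : ℂ)⁻¹ * Matrix.trace M

/-- Noncommutative *-polynomials in variables indexed by `ι`: elements of the free
`ℂ`-algebra on `ι ⊕ ι`, the second copy of `ι` standing for the starred variables. -/
abbrev StarPoly (ι : Type*) := FreeAlgebra ℂ (ι ⊕ ι)

/-- Evaluation of a *-polynomial at a tuple `x`, the second copy of the variables being
evaluated at `star (x i)`. -/
def evalPoly {ι : Type*} {B : Type*} [Ring B] [Algebra ℂ B] [Star B]
    (P : StarPoly ι) (x : ι → B) : B :=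
  FreeAlgebra.lift ℂ (Sum.elim x fun i => star (x i)) P

/-- The `ω`-orbit-`‖·‖₂`-ball centered at a tuple `B` of `k × k` matrices. -/
def orbitBall {ι : Type*} [Fintype ι] {k : ℕ} (B : ι → Mat k) (ω : ℝ) :
    Set (ι → Mat k) :=
  {T | ∃ W : Mat k, W ∈ unitary (Mat k) ∧
    tupleHS (fun i => T i - W * B i * star W) < ω}

/-- The covering number `o₂(S, ω)`: the minimal number of `ω`-orbit-`‖·‖₂`-balls with
centers in `S` needed to cover `S` (`⊤` if there is no finite such cover). -/
def o2 {ι : Type*} [Fintype ι] {k : ℕ} (S : Set (ι → Mat k)) (ω : ℝ) : ℕ∞ :=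
  sInf {n : ℕ∞ | ∃ F : Finset (ι → Mat k),
    ↑F ⊆ S ∧ S ⊆ (⋃ B ∈ F, orbitBall B ω) ∧ n = (F.card : ℕ∞)}

/-- Logarithm of an extended natural number, valued in the extended reals. -/
def elog (n : ℕ∞) : EReal :=
  WithTop.recTopCoe ⊤ (fun m : ℕ => ((Real.log m : ℝ) : EReal)) n

/-- The convention `∞ ⬝ 0 = 0` and `∞ ⬝ t = ∞` for `t > 0`. -/
def infMul (x : EReal) : EReal := if x = 0 then 0 else ⊤

variable {A : Type*} [CStarAlgebra A]

/-- Voiculescu's norm-microstate space `Γ_R^{top}(x₁,…,xₙ; k, ε, P₁,…,P_r)`: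
self-adjoint `k × k` matrices `T i` of operator norm at most `R` such that
`| ‖P_j(T)‖ - ‖P_j(x)‖ | ≤ ε` for each `j`. -/
def Gamma {ι : Type*} [Fintype ι] (x : ι → A) (R : ℝ) (k : ℕ) (ε : ℝ)
    {r : ℕ} (P : Fin r → StarPoly ι) : Set (ι → Mat k) :=
  {T | (∀ i, IsSelfAdjoint (T i)) ∧ (∀ i, opNorm (T i) ≤ R) ∧
    ∀ j, |opNorm (evalPoly (P j) T) - ‖evalPoly (P j) x‖| ≤ ε}

/-- Norm-microstate space of `x` in the presence of `y`: the projection onto the first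
coordinates of the microstate space of the joint tuple. -/
def GammaRel {ι κ : Type*} [Fintype ι] [Fintype κ] (x : ι → A) (y : κ → A)
    (R : ℝ) (k : ℕ) (ε : ℝ) {r : ℕ} (P : Fin r → StarPoly (ι ⊕ κ)) :
    Set (ι → Mat k) :=
  (fun T : ι ⊕ κ → Mat k => T ∘ Sum.inl) '' Gamma (Sum.elim x y) R k ε P

/-- Topological orbit dimension `K_top^{(2)}(x : y)` of a (self-adjoint) tuple `x`
in the presence of `y`. -/
def Ktop2sa {ι κ : Type*} [Fintype ι] [Fintype κ] (x : ι → A) (y : κ → A) : EReal :=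
  ⨆ (ω : ℝ) (_ : 0 < ω) (R : ℝ) (_ : 0 < R),
    ⨅ (ε : ℝ) (_ : 0 < ε) (r : ℕ) (P : Fin r → StarPoly (ι ⊕ κ)),
      limsup (fun k : ℕ =>
        elog (o2 (GammaRel x y R k ε P) ω) * ((((k : ℝ) ^ 2)⁻¹ : ℝ) : EReal)) atTop

/-- The tuple of real and imaginary parts of a tuple of elements. -/
def reim {ι : Type*} (x : ι → A) : ι ⊕ ι → A :=
  Sum.elim (fun i => (2⁻¹ : ℂ) • (x i + star (x i)))
    (fun i => ((2 * Complex.I)⁻¹ : ℂ) • (x i - star (x i)))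

/-- Topological orbit dimension `K_top^{(2)}(x : y)` for arbitrary tuples, obtained by
applying the self-adjoint version to the real and imaginary parts. -/
def Ktop2 {ι κ : Type*} [Fintype ι] [Fintype κ] (x : ι → A) (y : κ → A) : EReal :=
  Ktop2sa (reim x) (reim y)

/-- `K_top^{(3)}(G)` for a subset `G` of a C*-algebra. -/
def Ktop3 (G : Set A) : EReal :=
  ⨆ (n : ℕ) (x : Fin n → A) (_ : ∀ i, x i ∈ G),
    ⨅ (t : ℕ) (y : Fin t → A) (_ : ∀ j, y j ∈ G), infMul (Ktop2 x y)

/-- The C*-subalgebra generated by a subset: the topological closure of the star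
subalgebra generated by it. -/
def cstar (s : Set A) : StarSubalgebra ℂ A :=
  (StarAlgebra.adjoin ℂ s).topologicalClosure

/-- The tuple `x` admits matricial microstates: there are matrices realizing the norms of
all *-polynomials in `x` asymptotically; i.e. `C*(x)` is an MF algebra. -/
def IsMFTuple {ι : Type*} [Fintype ι] (x : ι → A) : Prop :=
  ∃ (m : ℕ → ℕ) (T : ∀ k, ι → Mat (m k)), (∀ k, 0 < m k) ∧
    ∀ Q : StarPoly ι,
      Tendsto (fun k => opNorm (evalPoly Q (T k))) atTop (nhds ‖evalPoly Q x‖)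

/-- A unital C*-algebra is MF if it admits a unital isometric embedding into
`∏ₖ M_{m_k}(ℂ) / ∑ₖ M_{m_k}(ℂ)`, expressed here by an asymptotically multiplicative,
asymptotically star-linear, asymptotically unital family of maps into matrices which is
isometric with respect to the quotient (limsup) norm. -/
def IsMF (A : Type*) [CStarAlgebra A] : Prop :=
  ∃ (m : ℕ → ℕ) (Φ : A → ∀ k, Mat (m k)),
    (∀ k, 0 < m k) ∧
    (∀ a b : A, Tendsto (fun k => opNorm (Φ (a + b) k - Φ a k - Φ b k)) atTop (nhds 0)) ∧
    (∀ a b : A, Tendsto (fun k => opNorm (Φ (a * b) k - Φ a k * Φ b k)) atTop (nhds 0)) ∧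
    (∀ (c : ℂ) (a : A), Tendsto (fun k => opNorm (Φ (c • a) k - c • Φ a k)) atTop (nhds 0)) ∧
    (∀ a : A, Tendsto (fun k => opNorm (Φ (star a) k - star (Φ a k))) atTop (nhds 0)) ∧
    Tendsto (fun k => opNorm (Φ 1 k - 1)) atTop (nhds 0) ∧
    ∀ a : A, limsup (fun k => opNorm (Φ a k)) atTop = ‖a‖

/-- A tracial state on a unital C*-algebra: a positive unital linear functional which is
tracial. -/
def IsTracialState (τ : A → ℂ) : Prop :=
  (∀ a b : A, τ (a + b) = τ a + τ b) ∧ (∀ (c : ℂ) (a : A), τ (c • a) = c * τ a) ∧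
  τ 1 = 1 ∧ (∀ a : A, 0 ≤ τ (star a * a)) ∧ ∀ a b : A, τ (a * b) = τ (b * a)

/-- An MF-trace (with respect to the generating tuple `x`): a tracial state which is a
limit of normalized matrix traces along microstates realizing the norms of all
*-polynomials in `x`. -/
def IsMFTrace {ι : Type*} [Fintype ι] (x : ι → A) (τ : A → ℂ) : Prop :=
  IsTracialState τ ∧
  ∃ (m : ℕ → ℕ) (T : ∀ k, ι → Mat (m k)), (∀ k, 0 < m k) ∧
    (∀ Q : StarPoly ι,
      Tendsto (fun k => opNorm (evalPoly Q (T k))) atTop (nhds ‖evalPoly Q x‖)) ∧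
    (∀ Q : StarPoly ι,
      Tendsto (fun k => normalizedTrace (evalPoly Q (T k))) atTop (nhds (τ (evalPoly Q x))))

/-- The product of the letters of a word. -/
def wordProd {M : Type*} [Monoid M] {ι : Type*} {q : ℕ} (x : ι → M) (w : Fin q → ι) : M :=
  (List.ofFn fun j => x (w j)).prod

/-- Tracial microstate space `Γ_R(x; m, k, ε; τ)`: self-adjoint matrices of norm at most
`R` whose normalized trace on every word of length at most `m` is `ε`-close to `τ` on the
corresponding word in `x`. -/
def GammaTr {ι : Type*} [Fintype ι] (x : ι → A) (τ : A → ℂ) (R : ℝ) (m k : ℕ) (ε : ℝ) :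
    Set (ι → Mat k) :=
  {T | (∀ i, IsSelfAdjoint (T i)) ∧ (∀ i, opNorm (T i) ≤ R) ∧
    ∀ q : ℕ, 1 ≤ q → q ≤ m → ∀ w : Fin q → ι,
      ‖normalizedTrace (wordProd T w) - τ (wordProd x w)‖ < ε}

/-- Tracial microstate space of `x` in the presence of `y`. -/
def GammaTrRel {ι κ : Type*} [Fintype ι] [Fintype κ] (x : ι → A) (y : κ → A) (τ : A → ℂ)
    (R : ℝ) (m k : ℕ) (ε : ℝ) : Set (ι → Mat k) :=
  (fun T : ι ⊕ κ → Mat k => T ∘ Sum.inl) '' GammaTr (Sum.elim x y) τ R m k ε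

/-- The modified free orbit dimension `K₂^{(2)}(x : y; τ)` of a (self-adjoint) tuple. -/
def K22sa {ι κ : Type*} [Fintype ι] [Fintype κ] (x : ι → A) (y : κ → A) (τ : A → ℂ) :
    EReal :=
  limsup (fun ω : ℝ =>
      ⨆ (R : ℝ) (_ : 0 < R), ⨅ (m : ℕ) (ε : ℝ) (_ : 0 < ε),
        limsup (fun k : ℕ =>
          elog (o2 (GammaTrRel x y τ R m k ε) ω) * ((((k : ℝ) ^ 2)⁻¹ : ℝ) : EReal)) atTop)
    (nhdsWithin (0 : ℝ) (Ioi 0))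

/-- The modified free orbit dimension for arbitrary tuples, via real and imaginary
parts. -/
def K22 {ι κ : Type*} [Fintype ι] [Fintype κ] (x : ι → A) (y : κ → A) (τ : A → ℂ) :
    EReal :=
  K22sa (reim x) (reim y) τ

/-- `K₃^{(3)}(G : τ)`. -/
def K33 (G : Set A) (τ : A → ℂ) : EReal :=
  ⨆ (n : ℕ) (x : Fin n → A) (_ : ∀ i, x i ∈ G),
    ⨅ (t : ℕ) (y : Fin t → A) (_ : ∀ j, y j ∈ G), infMul (K22 x y τ)

/-- A (possibly non-unital) *-algebra has no finite-dimensional representations if the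
only *-homomorphism from it into a matrix algebra is zero. -/
def HasNoFinDimRep (B : Type*) [NonUnitalNonAssocSemiring B] [Module ℂ B] [Star B] : Prop :=
  ∀ (k : ℕ) (φ : B →⋆ₙₐ[ℂ] Mat k) (b : B), φ b = 0

end OrbitDim

/-!
Since `x` generates `A`, every coordinate of a finite tuple `x'` is approximated in norm by a
*-polynomial `Q i` in the real and imaginary parts of `x`. Adding the test polynomials
`X i - Q i (Y)` forces every microstate of `x'` in the presence of `x` to be `‖·‖₂`-close to
`Q` applied to a microstate of `x`. The map `T ↦ Q (T)` commutes with unitary conjugation and is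
`‖·‖₂`-Lipschitz on operator-norm bounded tuples, so a cover of the microstates of `x` by
`ω₁`-orbit balls yields a cover of those of `x'` by `ω`-orbit balls with no more centers. Hence
`K_top^(2)(x' : x) ≤ K_top^(2)(x) = 0` for every finite `x'`, and `y = x` witnesses
`K_top^(3)(A) = 0`.
-/

namespace OrbitDim

-- For this instance `‖M‖` is `opNorm M` by definition (`Matrix.cstar_norm_def`).
open scoped Matrix Matrix.Norms.L2Operator

section MatrixNorms

variable {k : ℕ}

theorem norm_one_le : ‖(1 : Mat k)‖ ≤ 1 := by
  rw [Matrix.cstar_norm_def, map_one]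
  exact ContinuousLinearMap.norm_id_le

theorem norm_le_one_of_mem_unitary {U : Mat k} (hU : U ∈ unitary (Mat k)) : ‖U‖ ≤ 1 := by
  rw [← one_mul U, CStarRing.norm_mul_mem_unitary _ hU]
  exact norm_one_le

theorem norm_algebraMap_le (c : ℂ) : ‖algebraMap ℂ (Mat k) c‖ ≤ ‖c‖ := by
  rw [Algebra.algebraMap_eq_smul_one, norm_smul]
  exact mul_le_of_le_one_right (norm_nonneg c) norm_one_le

theorem norm_conj_le {U : Mat k} (hU : U ∈ unitary (Mat k)) (M : Mat k) :
    ‖U * M * star U‖ ≤ ‖M‖ := by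
  rw [CStarRing.norm_mul_mem_unitary _ (Unitary.star_mem hU),
    CStarRing.norm_mem_unitary_mul _ hU]

theorem sq_norm_toLp_mulVec_le (A : Mat k) (v : Fin k → ℂ) :
    ‖(WithLp.toLp 2 (A *ᵥ v) : EuclideanSpace ℂ (Fin k))‖ ^ 2
      ≤ ‖A‖ ^ 2 * ‖(WithLp.toLp 2 v : EuclideanSpace ℂ (Fin k))‖ ^ 2 := by
  rw [← mul_pow]
  exact pow_le_pow_left₀ (norm_nonneg _) (Matrix.l2_opNorm_mulVec A _) 2

theorem hsNormSq_nonneg (M : Mat k) : 0 ≤ hsNormSq M := by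
  unfold hsNormSq; positivity

theorem hsNorm_nonneg (M : Mat k) : 0 ≤ hsNorm M := Real.sqrt_nonneg _

theorem hsNormSq_eq_sum_col (M : Mat k) :
    hsNormSq M
      = (k : ℝ)⁻¹ * ∑ t, ‖(WithLp.toLp 2 fun s => M s t : EuclideanSpace ℂ (Fin k))‖ ^ 2 := by
  simp only [hsNormSq, EuclideanSpace.norm_sq_eq]
  rw [Finset.sum_comm]

theorem hsNormSq_mul_le (A B : Mat k) : hsNormSq (A * B) ≤ ‖A‖ ^ 2 * hsNormSq B := by
  calc hsNormSq (A * B)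
      = (k : ℝ)⁻¹ * ∑ t,
          ‖(WithLp.toLp 2 (A *ᵥ fun s => B s t) : EuclideanSpace ℂ (Fin k))‖ ^ 2 :=
        hsNormSq_eq_sum_col _
    _ ≤ (k : ℝ)⁻¹ * ∑ t,
          ‖A‖ ^ 2 * ‖(WithLp.toLp 2 fun s => B s t : EuclideanSpace ℂ (Fin k))‖ ^ 2 :=
        mul_le_mul_of_nonneg_left (Finset.sum_le_sum fun t _ => sq_norm_toLp_mulVec_le _ _)
          (inv_nonneg.2 (Nat.cast_nonneg _))
    _ = ‖A‖ ^ 2 * hsNormSq B := by rw [hsNormSq_eq_sum_col, ← Finset.mul_sum]; ring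

theorem hsNormSq_star (M : Mat k) : hsNormSq (star M) = hsNormSq M := by
  simp only [hsNormSq, Matrix.star_apply, norm_star]
  rw [Finset.sum_comm]

theorem hsNormSq_one_le : hsNormSq (1 : Mat k) ≤ 1 := by
  have h : ∑ s, ∑ t, ‖(1 : Mat k) s t‖ ^ 2 = k := by
    simp [Matrix.one_apply, apply_ite (fun z : ℂ => ‖z‖ ^ 2)]
  rw [hsNormSq, h]
  exact inv_mul_le_one_of_le₀ le_rfl (Nat.cast_nonneg _)

theorem hsNormSq_conj_le {U : Mat k} (hU : U ∈ unitary (Mat k)) (M : Mat k) :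
    hsNormSq (U * M * star U) ≤ hsNormSq M := by
  have hU1 : ‖U‖ ^ 2 ≤ 1 := pow_le_one₀ (norm_nonneg _) (norm_le_one_of_mem_unitary hU)
  calc hsNormSq (U * M * star U) ≤ ‖U‖ ^ 2 * hsNormSq (M * star U) := by
        rw [mul_assoc]; exact hsNormSq_mul_le _ _
    _ ≤ hsNormSq (M * star U) := mul_le_of_le_one_left (hsNormSq_nonneg _) hU1
    _ = hsNormSq (U * star M) := by rw [← hsNormSq_star, star_mul, star_star]
    _ ≤ ‖U‖ ^ 2 * hsNormSq (star M) := hsNormSq_mul_le _ _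
    _ ≤ hsNormSq M := by
        rw [hsNormSq_star]; exact mul_le_of_le_one_left (hsNormSq_nonneg _) hU1

theorem hsNorm_mul_le (A B : Mat k) : hsNorm (A * B) ≤ ‖A‖ * hsNorm B := by
  rw [hsNorm, hsNorm, ← Real.sqrt_sq (norm_nonneg A), ← Real.sqrt_mul (sq_nonneg _)]
  exact Real.sqrt_le_sqrt (hsNormSq_mul_le A B)

theorem hsNorm_star (M : Mat k) : hsNorm (star M) = hsNorm M := by
  rw [hsNorm, hsNorm, hsNormSq_star]

theorem hsNorm_mul_le_right (A B : Mat k) : hsNorm (A * B) ≤ hsNorm A * ‖B‖ := by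
  rw [← hsNorm_star, star_mul, ← hsNorm_star A, mul_comm, ← norm_star B]
  exact hsNorm_mul_le _ _

theorem hsNorm_le_norm (M : Mat k) : hsNorm M ≤ ‖M‖ := by
  calc hsNorm M = hsNorm (M * 1) := by rw [mul_one]
    _ ≤ ‖M‖ * hsNorm 1 := hsNorm_mul_le _ _
    _ ≤ ‖M‖ := mul_le_of_le_one_right (norm_nonneg _) (Real.sqrt_le_one.2 hsNormSq_one_le)

end MatrixNorms

section Tuple

variable {ι : Type*} [Fintype ι] {k : ℕ}

def hsVec (T : ι → Mat k) : EuclideanSpace ℂ (ι × Fin k × Fin k) :=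
  WithLp.toLp 2 fun p => T p.1 p.2.1 p.2.2

theorem tupleHS_eq_norm (T : ι → Mat k) : tupleHS T = √(k : ℝ)⁻¹ * ‖hsVec T‖ := by
  rw [tupleHS, ← Real.sqrt_sq (norm_nonneg (hsVec T)),
    ← Real.sqrt_mul (inv_nonneg.2 (Nat.cast_nonneg _)), EuclideanSpace.norm_sq_eq]
  simp only [hsNormSq, Finset.mul_sum, Fintype.sum_prod_type]
  rfl

theorem tupleHS_add_le (A B : ι → Mat k) :
    tupleHS (fun i => A i + B i) ≤ tupleHS A + tupleHS B := by
  rw [tupleHS_eq_norm, tupleHS_eq_norm, tupleHS_eq_norm, ← mul_add]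
  exact mul_le_mul_of_nonneg_left (norm_add_le (hsVec A) (hsVec B)) (Real.sqrt_nonneg _)

theorem tupleHS_sub_le (A B C : ι → Mat k) :
    tupleHS (fun i => A i - C i)
      ≤ tupleHS (fun i => A i - B i) + tupleHS (fun i => B i - C i) := by
  rw [tupleHS_eq_norm, tupleHS_eq_norm, tupleHS_eq_norm, ← mul_add]
  exact mul_le_mul_of_nonneg_left
    (norm_sub_le_norm_sub_add_norm_sub (hsVec A) (hsVec B) (hsVec C)) (Real.sqrt_nonneg _)

theorem tupleHS_sub_comm (A B : ι → Mat k) :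
    tupleHS (fun i => A i - B i) = tupleHS (fun i => B i - A i) := by
  rw [tupleHS_eq_norm, tupleHS_eq_norm]
  exact congrArg _ (norm_sub_rev (hsVec A) (hsVec B))

theorem tupleHS_conj_sub_le {U : Mat k} (hU : U ∈ unitary (Mat k)) (A B : ι → Mat k) :
    tupleHS (fun i => U * A i * star U - U * B i * star U) ≤ tupleHS (fun i => A i - B i) := by
  simp only [tupleHS, ← mul_sub, ← sub_mul]
  exact Real.sqrt_le_sqrt (Finset.sum_le_sum fun i _ => hsNormSq_conj_le hU _)

theorem hsNorm_le_tupleHS (T : ι → Mat k) (i : ι) : hsNorm (T i) ≤ tupleHS T :=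
  Real.sqrt_le_sqrt (Finset.single_le_sum (fun j _ => hsNormSq_nonneg (T j)) (Finset.mem_univ i))

theorem tupleHS_le_sum_hsNorm (T : ι → Mat k) : tupleHS T ≤ ∑ i, hsNorm (T i) := by
  have hsq : ∀ i, hsNormSq (T i) = hsNorm (T i) ^ 2 := fun i =>
    (Real.sq_sqrt (hsNormSq_nonneg _)).symm
  refine Real.sqrt_le_iff.2 ⟨Finset.sum_nonneg fun i _ => Real.sqrt_nonneg _, ?_⟩
  simp only [hsq]
  exact Finset.sum_sq_le_sq_sum_of_nonneg fun i _ => Real.sqrt_nonneg _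

theorem hsNorm_eq_tupleHS (M : Mat k) : hsNorm M = tupleHS fun _ : Unit => M := by
  simp [hsNorm, tupleHS]

theorem hsNorm_add_le (M N : Mat k) : hsNorm (M + N) ≤ hsNorm M + hsNorm N := by
  simpa only [hsNorm_eq_tupleHS] using tupleHS_add_le (fun _ : Unit => M) (fun _ => N)

theorem hsNorm_zero : hsNorm (0 : Mat k) = 0 := by
  simp [hsNorm, hsNormSq]

end Tuple

section Covering

variable {ι κ : Type*} [Fintype ι] [Fintype κ] {k : ℕ}

theorem exists_unitary_tupleHS_conj_lt {B T T' : ι → Mat k} {ω : ℝ} (hT : T ∈ orbitBall B ω)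
    (hT' : T' ∈ orbitBall B ω) :
    ∃ V ∈ unitary (Mat k), tupleHS (fun i => T i - V * T' i * star V) < 2 * ω := by
  obtain ⟨W, hW, hTW⟩ := hT
  obtain ⟨W', hW', hTW'⟩ := hT'
  set V := W * star W'
  have hV : V ∈ unitary (Mat k) := mul_mem hW (Unitary.star_mem hW')
  have hVB : ∀ i, V * (W' * B i * star W') * star V = W * B i * star W := fun i => by
    calc V * (W' * B i * star W') * star V
        = W * (star W' * W') * B i * (star W' * W') * star W := by
          simp only [V, star_mul, star_star, mul_assoc]
      _ = W * B i * star W := by rw [Unitary.star_mul_self_of_mem hW', mul_one, mul_one]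
  refine ⟨V, hV, ?_⟩
  calc tupleHS (fun i => T i - V * T' i * star V)
      ≤ tupleHS (fun i => T i - W * B i * star W)
        + tupleHS (fun i => V * (W' * B i * star W') * star V - V * T' i * star V) := by
        simpa only [hVB] using tupleHS_sub_le T (fun i => W * B i * star W) _
    _ ≤ tupleHS (fun i => T i - W * B i * star W)
        + tupleHS (fun i => T' i - W' * B i * star W') := by
        rw [tupleHS_sub_comm T']
        exact add_le_add le_rfl (tupleHS_conj_sub_le hV _ _)
    _ < 2 * ω := by linarith

theorem o2_le_o2_of_near {S : Set (ι → Mat k)} {Γ : Set (κ → Mat k)} {ω ω₁ : ℝ}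
    (near : (ι → Mat k) → (κ → Mat k) → Prop) (h_near : ∀ s ∈ S, ∃ T ∈ Γ, near s T)
    (h_ball : ∀ B, ∀ s ∈ S, ∀ s' ∈ S, ∀ T ∈ Γ, ∀ T' ∈ Γ, near s T → near s' T' →
      T ∈ orbitBall B ω₁ → T' ∈ orbitBall B ω₁ → s ∈ orbitBall s' ω) :
    o2 S ω ≤ o2 Γ ω₁ := by
  classical
  refine le_sInf ?_
  rintro _ ⟨F, -, hF, rfl⟩
  set good : (κ → Mat k) → Prop := fun B => ∃ s ∈ S, ∃ T ∈ Γ, near s T ∧ T ∈ orbitBall B ω₁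
  choose! c hcS T hTΓ hnear hTB using fun B (h : good B) => h
  refine sInf_le_of_le ⟨(F.filter good).image c, ?_, ?_, rfl⟩ ?_
  · intro s hs
    obtain ⟨B, hB, rfl⟩ := Finset.mem_image.1 hs
    exact hcS B (Finset.mem_filter.1 hB).2
  · intro s hs
    obtain ⟨T₀, hT₀Γ, hT₀⟩ := h_near s hs
    obtain ⟨B, hBF, hT₀B⟩ := Set.mem_iUnion₂.1 (hF hT₀Γ)
    have hB : good B := ⟨s, hs, T₀, hT₀Γ, hT₀, hT₀B⟩
    exact Set.mem_iUnion₂.2 ⟨c B, Finset.mem_image_of_mem _ (Finset.mem_filter.2 ⟨hBF, hB⟩),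
      h_ball B s hs (c B) (hcS B hB) T₀ hT₀Γ (T B) (hTΓ B hB) hT₀ (hnear B hB) hT₀B (hTB B hB)⟩
  · exact_mod_cast Finset.card_image_le.trans (Finset.card_filter_le _ _)

theorem o2_le_of_approx {S : Set (ι → Mat k)} {Γ : Set (κ → Mat k)}
    (q : (κ → Mat k) → ι → Mat k) {R L θ ω ω₁ : ℝ} (hL : 0 ≤ L)
    (hω : 2 * θ + L * (2 * ω₁) < ω) (hΓ : ∀ T ∈ Γ, ∀ j, ‖T j‖ ≤ R)
    (h_approx : ∀ s ∈ S, ∃ T ∈ Γ, tupleHS (fun i => s i - q T i) ≤ θ)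
    (hq_conj : ∀ U ∈ unitary (Mat k), ∀ T,
      q (fun j => U * T j * star U) = fun i => U * q T i * star U)
    (hq_lip : ∀ T T' : κ → Mat k, (∀ j, ‖T j‖ ≤ R) → (∀ j, ‖T' j‖ ≤ R) →
      tupleHS (fun i => q T i - q T' i) ≤ L * tupleHS (fun j => T j - T' j)) :
    o2 S ω ≤ o2 Γ ω₁ := by
  refine o2_le_o2_of_near (fun s T => tupleHS (fun i => s i - q T i) ≤ θ) h_approx ?_
  intro B s _ s' _ T hT T' hT' hsT hs'T' hTB hT'B
  obtain ⟨V, hV, hTV⟩ := exists_unitary_tupleHS_conj_lt hTB hT'B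
  have hlip : tupleHS (fun i => q T i - V * q T' i * star V) ≤ L * (2 * ω₁) := by
    have hqV : ∀ i, V * q T' i * star V = q (fun j => V * T' j * star V) i := fun i =>
      (congrFun (hq_conj V hV T') i).symm
    simp only [hqV]
    refine (hq_lip _ _ (hΓ T hT) (fun j => (norm_conj_le hV _).trans (hΓ T' hT' j))).trans ?_
    exact mul_le_mul_of_nonneg_left hTV.le hL
  have hconj : tupleHS (fun i => V * q T' i * star V - V * s' i * star V) ≤ θ :=
    (tupleHS_conj_sub_le hV _ _).trans ((tupleHS_sub_comm _ _).trans_le hs'T')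
  refine ⟨V, hV, ?_⟩
  calc tupleHS (fun i => s i - V * s' i * star V)
      ≤ tupleHS (fun i => s i - q T i) + (tupleHS (fun i => q T i - V * q T' i * star V)
        + tupleHS (fun i => V * q T' i * star V - V * s' i * star V)) :=
        (tupleHS_sub_le _ _ _).trans (add_le_add le_rfl (tupleHS_sub_le _ _ _))
    _ < ω := by linarith

end Covering

section Poly

variable {ι κ : Type*}

def StarPoly.rename (e : ι → κ) : StarPoly ι →ₐ[ℂ] StarPoly κ :=
  FreeAlgebra.lift ℂ (FreeAlgebra.ι ℂ ∘ Sum.map e e)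

variable {B : Type*} [Ring B] [Algebra ℂ B] [Star B]

theorem evalPoly_ι_inl (i : ι) (T : ι → B) :
    evalPoly (FreeAlgebra.ι ℂ (Sum.inl i)) T = T i := by
  simp [evalPoly]

theorem evalPoly_sub (P Q : StarPoly ι) (T : ι → B) :
    evalPoly (P - Q) T = evalPoly P T - evalPoly Q T :=
  map_sub _ _ _

theorem evalPoly_rename (e : ι → κ) (P : StarPoly ι) (T : κ → B) :
    evalPoly (StarPoly.rename e P) T = evalPoly P (T ∘ e) := by
  induction P using FreeAlgebra.induction with
  | grade0 c => simp [evalPoly]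
  | grade1 j => rcases j with i | i <;> simp [evalPoly, StarPoly.rename]
  | mul P Q hP hQ => simp only [evalPoly, map_mul] at *; rw [hP, hQ]
  | add P Q hP hQ => simp only [evalPoly, map_add] at *; rw [hP, hQ]

theorem map_evalPoly {C : Type*} [Ring C] [Algebra ℂ C] [Star C] (φ : B →⋆ₐ[ℂ] C)
    (P : StarPoly ι) (T : ι → B) : φ (evalPoly P T) = evalPoly P (φ ∘ T) := by
  induction P using FreeAlgebra.induction with
  | grade0 c => simp only [evalPoly, AlgHom.commutes]; exact φ.commutes c
  | grade1 j => rcases j with i | i <;> simp [evalPoly, map_star]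
  | mul P Q hP hQ => simp only [evalPoly, map_mul] at *; rw [hP, hQ]
  | add P Q hP hQ => simp only [evalPoly, map_add] at *; rw [hP, hQ]

end Poly

section Lipschitz

theorem exists_bound_lipschitz_lift {σ : Type*} [Fintype σ] (R : ℝ) (P : FreeAlgebra ℂ σ) :
    ∃ C : ℝ, 0 ≤ C ∧ ∀ (k : ℕ) (f g : σ → Mat k), (∀ j, ‖f j‖ ≤ R) → (∀ j, ‖g j‖ ≤ R) →
      ‖FreeAlgebra.lift ℂ f P‖ ≤ C ∧
      hsNorm (FreeAlgebra.lift ℂ f P - FreeAlgebra.lift ℂ g P) ≤ C * ∑ j, hsNorm (f j - g j) := by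
  induction P using FreeAlgebra.induction with
  | grade0 c =>
    refine ⟨‖c‖, norm_nonneg c, fun k f g _ _ => ?_⟩
    simp only [AlgHom.commutes, sub_self, hsNorm_zero]
    exact ⟨norm_algebraMap_le c,
      mul_nonneg (norm_nonneg c) (Finset.sum_nonneg fun j _ => hsNorm_nonneg _)⟩
  | grade1 i =>
    refine ⟨max R 1, zero_le_one.trans (le_max_right R 1), fun k f g hf _ => ?_⟩
    simp only [FreeAlgebra.lift_ι_apply]
    refine ⟨(hf i).trans (le_max_left R 1), ?_⟩
    calc hsNorm (f i - g i) ≤ ∑ j, hsNorm (f j - g j) :=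
          Finset.single_le_sum (f := fun j => hsNorm (f j - g j)) (fun j _ => hsNorm_nonneg _)
            (Finset.mem_univ i)
      _ ≤ max R 1 * ∑ j, hsNorm (f j - g j) :=
          le_mul_of_one_le_left (Finset.sum_nonneg fun j _ => hsNorm_nonneg _)
            (le_max_right R 1)
  | mul P Q hP hQ =>
    obtain ⟨C₁, hC₁, H₁⟩ := hP
    obtain ⟨C₂, hC₂, H₂⟩ := hQ
    refine ⟨2 * C₁ * C₂, by positivity, fun k f g hf hg => ?_⟩
    obtain ⟨hPf, hPfg⟩ := H₁ k f g hf hg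
    obtain ⟨hQf, hQfg⟩ := H₂ k f g hf hg
    obtain ⟨hQg, -⟩ := H₂ k g g hg hg
    set Pf := FreeAlgebra.lift ℂ f P
    set Pg := FreeAlgebra.lift ℂ g P
    set Qf := FreeAlgebra.lift ℂ f Q
    set Qg := FreeAlgebra.lift ℂ g Q
    set d := ∑ j, hsNorm (f j - g j)
    have hd : 0 ≤ d := Finset.sum_nonneg fun j _ => hsNorm_nonneg _
    simp only [map_mul]
    constructor
    · calc ‖Pf * Qf‖ ≤ ‖Pf‖ * ‖Qf‖ := norm_mul_le _ _
        _ ≤ C₁ * C₂ := mul_le_mul hPf hQf (norm_nonneg _) hC₁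
        _ ≤ 2 * C₁ * C₂ := by nlinarith [mul_nonneg hC₁ hC₂]
    · calc hsNorm (Pf * Qf - Pg * Qg) = hsNorm (Pf * (Qf - Qg) + (Pf - Pg) * Qg) := by
            congr 1; noncomm_ring
        _ ≤ ‖Pf‖ * hsNorm (Qf - Qg) + hsNorm (Pf - Pg) * ‖Qg‖ :=
            (hsNorm_add_le _ _).trans (add_le_add (hsNorm_mul_le _ _) (hsNorm_mul_le_right _ _))
        _ ≤ C₁ * (C₂ * d) + C₁ * d * C₂ :=
            add_le_add (mul_le_mul hPf hQfg (hsNorm_nonneg _) hC₁)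
              (mul_le_mul hPfg hQg (norm_nonneg _) (mul_nonneg hC₁ hd))
        _ = 2 * C₁ * C₂ * d := by ring
  | add P Q hP hQ =>
    obtain ⟨C₁, hC₁, H₁⟩ := hP
    obtain ⟨C₂, hC₂, H₂⟩ := hQ
    refine ⟨C₁ + C₂, add_nonneg hC₁ hC₂, fun k f g hf hg => ?_⟩
    obtain ⟨hPf, hPfg⟩ := H₁ k f g hf hg
    obtain ⟨hQf, hQfg⟩ := H₂ k f g hf hg
    simp only [map_add, add_sub_add_comm, add_mul]
    exact ⟨(norm_add_le _ _).trans (add_le_add hPf hQf),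
      (hsNorm_add_le _ _).trans (add_le_add hPfg hQfg)⟩

theorem exists_lipschitz_evalPoly {ι : Type*} [Fintype ι] (R : ℝ) (P : StarPoly ι) :
    ∃ C : ℝ, 0 ≤ C ∧ ∀ (k : ℕ) (T S : ι → Mat k), (∀ i, ‖T i‖ ≤ R) → (∀ i, ‖S i‖ ≤ R) →
      hsNorm (evalPoly P T - evalPoly P S) ≤ C * tupleHS (fun i => T i - S i) := by
  obtain ⟨C, hC, H⟩ := exists_bound_lipschitz_lift R P
  refine ⟨C * (2 * Fintype.card ι), by positivity, fun k T S hT hS => ?_⟩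
  have hbound : ∀ (U : ι → Mat k), (∀ i, ‖U i‖ ≤ R) → ∀ j, ‖Sum.elim U (star U) j‖ ≤ R := by
    rintro U hU (i | i)
    · exact hU i
    · simpa only [Sum.elim_inr, Pi.star_apply, norm_star] using hU i
  have hsum : ∑ j, hsNorm (Sum.elim T (star T) j - Sum.elim S (star S) j)
      ≤ 2 * Fintype.card ι * tupleHS (fun i => T i - S i) := by
    calc ∑ j, hsNorm (Sum.elim T (star T) j - Sum.elim S (star S) j)
        = 2 * ∑ i, hsNorm (T i - S i) := by
          simp only [Fintype.sum_sum_type, Sum.elim_inl, Sum.elim_inr, Pi.star_apply, ← star_sub,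
            hsNorm_star, ← two_mul]
      _ ≤ 2 * ∑ _i : ι, tupleHS (fun i => T i - S i) := by
          gcongr with i
          exact hsNorm_le_tupleHS (fun i => T i - S i) i
      _ = 2 * Fintype.card ι * tupleHS (fun i => T i - S i) := by
          rw [Finset.sum_const, Finset.card_univ, nsmul_eq_mul, mul_assoc]
  calc hsNorm (evalPoly P T - evalPoly P S)
      ≤ C * ∑ j, hsNorm (Sum.elim T (star T) j - Sum.elim S (star S) j) :=
        (H k _ _ (hbound T hT) (hbound S hS)).2
    _ ≤ C * (2 * Fintype.card ι) * tupleHS (fun i => T i - S i) := by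
        rw [mul_assoc]; exact mul_le_mul_of_nonneg_left hsum hC

theorem exists_lipschitz_evalPoly_tuple {ι κ : Type*} [Fintype ι] [Fintype κ] (R : ℝ)
    (Q : ι → StarPoly κ) :
    ∃ L : ℝ, 0 ≤ L ∧ ∀ (k : ℕ) (T T' : κ → Mat k), (∀ j, ‖T j‖ ≤ R) → (∀ j, ‖T' j‖ ≤ R) →
      tupleHS (fun i => evalPoly (Q i) T - evalPoly (Q i) T')
        ≤ L * tupleHS (fun j => T j - T' j) := by
  choose C hC hCQ using fun i => exists_lipschitz_evalPoly R (Q i)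
  refine ⟨∑ i, C i, Finset.sum_nonneg fun i _ => hC i, fun k T T' hT hT' => ?_⟩
  calc tupleHS (fun i => evalPoly (Q i) T - evalPoly (Q i) T')
      ≤ ∑ i, hsNorm (evalPoly (Q i) T - evalPoly (Q i) T') := tupleHS_le_sum_hsNorm _
    _ ≤ ∑ i, C i * tupleHS (fun j => T j - T' j) :=
        Finset.sum_le_sum fun i _ => hCQ i k T T' hT hT'
    _ = (∑ i, C i) * tupleHS (fun j => T j - T' j) := (Finset.sum_mul _ _ _).symm

end Lipschitz

theorem elog_nonneg (n : ℕ∞) : 0 ≤ elog n := by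
  induction n using WithTop.recTopCoe with
  | top => exact le_top
  | coe m => exact EReal.coe_nonneg.2 (Real.log_natCast_nonneg m)

theorem elog_mono {a b : ℕ∞} (h : a ≤ b) : elog a ≤ elog b := by
  induction b using WithTop.recTopCoe with
  | top => exact le_top
  | coe m =>
    induction a using WithTop.recTopCoe with
    | top => exact absurd h (WithTop.not_top_le_coe _)
    | coe l =>
      have hlm : l ≤ m := WithTop.coe_le_coe.1 h
      refine EReal.coe_le_coe_iff.2 ?_
      rcases Nat.eq_zero_or_pos l with rfl | hl
      · simpa using Real.log_natCast_nonneg m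
      · exact Real.log_le_log (by exact_mod_cast hl) (by exact_mod_cast hlm)

theorem limsup_elog_mono {N N' : ℕ → ℕ∞} (h : ∀ k, N k ≤ N' k) :
    limsup (fun k : ℕ => elog (N k) * ((((k : ℝ) ^ 2)⁻¹ : ℝ) : EReal)) atTop
      ≤ limsup (fun k : ℕ => elog (N' k) * ((((k : ℝ) ^ 2)⁻¹ : ℝ) : EReal)) atTop :=
  limsup_le_limsup (Eventually.of_forall fun k =>
    mul_le_mul_of_nonneg_right (elog_mono (h k)) (EReal.coe_nonneg.2 (by positivity)))

section OrbitDimension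

variable {A : Type*} [CStarAlgebra A]

theorem norm_le_of_mem_GammaRel {ι κ : Type*} [Fintype ι] [Fintype κ] {x : ι → A} {y : κ → A}
    {R ε : ℝ} {k r : ℕ} {P : Fin r → StarPoly (ι ⊕ κ)} {T : ι → Mat k}
    (hT : T ∈ GammaRel x y R k ε P) (i : ι) : ‖T i‖ ≤ R := by
  obtain ⟨U, hU, rfl⟩ := hT
  exact hU.2.1 (Sum.inl i)

/-- The family `P` (in `y` only) followed by the polynomials `X i - Q i (Y)`. -/
def approxFamily {ι κ κ' : Type*} [Fintype ι] [IsEmpty κ'] {r : ℕ}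
    (P : Fin r → StarPoly (κ ⊕ κ')) (Q : ι → StarPoly κ) :
    Fin (r + Fintype.card ι) → StarPoly (ι ⊕ κ) :=
  Fin.append (fun j => StarPoly.rename (Sum.elim Sum.inr isEmptyElim) (P j)) fun m =>
    FreeAlgebra.ι ℂ (Sum.inl (Sum.inl ((Fintype.equivFin ι).symm m)))
      - StarPoly.rename Sum.inr (Q ((Fintype.equivFin ι).symm m))

theorem comp_elim_inr_isEmptyElim {ι κ κ' X : Type*} [IsEmpty κ'] (V : ι ⊕ κ → X)
    (w : κ' → X) : V ∘ Sum.elim Sum.inr isEmptyElim = Sum.elim (V ∘ Sum.inr) w := by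
  funext j
  rcases j with j | j
  · rfl
  · exact isEmptyElim j

theorem exists_mem_GammaRel_near {ι κ κ' : Type*} [Fintype ι] [Fintype κ] [Fintype κ']
    [IsEmpty κ'] {x : ι → A} {y : κ → A} (z : κ' → A) {R ε ε' : ℝ} (hε : ε ≤ ε') {k r : ℕ}
    (P : Fin r → StarPoly (κ ⊕ κ')) (Q : ι → StarPoly κ) {S : ι → Mat k}
    (hS : S ∈ GammaRel x y R k ε (approxFamily P Q)) :
    ∃ T ∈ GammaRel y z R k ε' P,
      ∀ i, ‖S i - evalPoly (Q i) T‖ ≤ ‖x i - evalPoly (Q i) y‖ + ε := by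
  obtain ⟨U, ⟨hUsa, hUR, hUP⟩, rfl⟩ := hS
  refine ⟨U ∘ Sum.inr, ⟨Sum.elim (U ∘ Sum.inr) isEmptyElim, ⟨?_, ?_, fun j => ?_⟩, rfl⟩,
    fun i => ?_⟩
  · rintro (j | j)
    exacts [hUsa _, isEmptyElim j]
  · rintro (j | j)
    exacts [hUR _, isEmptyElim j]
  · have hj := hUP (Fin.castAdd _ j)
    rw [approxFamily, Fin.append_left, evalPoly_rename, evalPoly_rename,
      comp_elim_inr_isEmptyElim U isEmptyElim, comp_elim_inr_isEmptyElim (Sum.elim x y) z,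
      Sum.elim_comp_inr] at hj
    exact hj.trans hε
  · have hi := hUP (Fin.natAdd r (Fintype.equivFin ι i))
    rw [approxFamily, Fin.append_right, Equiv.symm_apply_apply, evalPoly_sub, evalPoly_sub,
      evalPoly_ι_inl, evalPoly_ι_inl, evalPoly_rename, evalPoly_rename, Sum.elim_comp_inr] at hi
    exact le_add_of_sub_left_le (abs_le.1 hi).2

theorem Ktop2sa_nonneg {ι κ : Type*} [Fintype ι] [Fintype κ] (x : ι → A) (y : κ → A) :
    0 ≤ Ktop2sa x y := by
  refine le_trans ?_ (le_iSup₂_of_le 1 one_pos (le_iSup₂_of_le 1 one_pos le_rfl))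
  refine le_iInf₂ fun ε _ => le_iInf₂ fun r P => ?_
  refine le_trans ?_ (limsup_le_limsup (Eventually.of_forall fun k =>
    mul_le_mul_of_nonneg_right (elog_nonneg (o2 (GammaRel x y 1 k ε P) 1))
      (EReal.coe_nonneg.2 (by positivity))))
  simp

theorem Ktop2sa_le_of_approx {ι κ κ' : Type*} [Fintype ι] [Fintype κ] [Fintype κ'] [IsEmpty κ']
    (x : ι → A) (y : κ → A) (z : κ' → A)
    (hx : ∀ i, ∀ δ > 0, ∃ Q : StarPoly κ, ‖x i - evalPoly Q y‖ < δ) :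
    Ktop2sa x y ≤ Ktop2sa y z := by
  refine iSup₂_le fun ω hω => iSup₂_le fun R hR => ?_
  set N : ℝ := (Fintype.card ι : ℝ)
  set δ := ω / (8 * (N + 1))
  have hδ : 0 < δ := by positivity
  choose Q hQ using fun i => hx i δ hδ
  obtain ⟨L, hL, hQlip⟩ := exists_lipschitz_evalPoly_tuple R Q
  set ω₁ := ω / (8 * (L + 1))
  have hω₁ : 0 < ω₁ := by positivity
  have harith : 2 * (N * (2 * δ)) + L * (2 * ω₁) < ω := by
    have h1 : δ * (8 * (N + 1)) = ω := div_mul_cancel₀ ω (by positivity)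
    have h2 : ω₁ * (8 * (L + 1)) = ω := div_mul_cancel₀ ω (by positivity)
    have hN : 0 ≤ N := Nat.cast_nonneg _
    nlinarith [mul_nonneg hN hδ.le, mul_nonneg hL hω₁.le]
  refine le_trans ?_ (le_iSup₂_of_le ω₁ hω₁ (le_iSup₂_of_le R hR le_rfl))
  refine le_iInf₂ fun ε' hε' => le_iInf₂ fun r P => ?_
  refine iInf₂_le_of_le (min δ ε') (lt_min hδ hε') (iInf₂_le_of_le _ (approxFamily P Q)
    (limsup_elog_mono fun k => ?_))
  refine o2_le_of_approx (fun T i => evalPoly (Q i) T) hL harith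
    (fun T hT => norm_le_of_mem_GammaRel hT) (fun s hs => ?_) (fun U hU T => ?_) (hQlip k)
  · obtain ⟨T, hT, hsT⟩ := exists_mem_GammaRel_near z (min_le_right δ ε') P Q hs
    refine ⟨T, hT, ?_⟩
    calc tupleHS (fun i => s i - evalPoly (Q i) T)
        ≤ ∑ i, hsNorm (s i - evalPoly (Q i) T) := tupleHS_le_sum_hsNorm _
      _ ≤ ∑ _i : ι, 2 * δ := Finset.sum_le_sum fun i _ => (hsNorm_le_norm _).trans <|
          (hsT i).trans (by linarith [hQ i, min_le_left δ ε'])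
      _ = N * (2 * δ) := by rw [Finset.sum_const, Finset.card_univ, nsmul_eq_mul]
  · funext i
    exact (map_evalPoly (Unitary.conjStarAlgAut ℂ (Mat k) ⟨U, hU⟩ : Mat k →⋆ₐ[ℂ] Mat k)
      (Q i) T).symm

theorem reim_inl_add_I_smul_reim_inr {ι : Type*} (x : ι → A) (i : ι) :
    reim x (Sum.inl i) + Complex.I • reim x (Sum.inr i) = x i := by
  simp only [reim, Sum.elim_inl, Sum.elim_inr, smul_smul]
  rw [show Complex.I * (2 * Complex.I)⁻¹ = 2⁻¹ by field_simp]
  module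

theorem reim_inl_sub_I_smul_reim_inr {ι : Type*} (x : ι → A) (i : ι) :
    reim x (Sum.inl i) - Complex.I • reim x (Sum.inr i) = star (x i) := by
  simp only [reim, Sum.elim_inl, Sum.elim_inr, smul_smul]
  rw [show Complex.I * (2 * Complex.I)⁻¹ = 2⁻¹ by field_simp]
  module

theorem exists_evalPoly_reim_eq_of_mem_adjoin {ι : Type*} {x : ι → A} {a : A}
    (ha : a ∈ StarAlgebra.adjoin ℂ (Set.range x)) :
    ∃ Q : StarPoly (ι ⊕ ι), evalPoly Q (reim x) = a := by
  set φ := FreeAlgebra.lift ℂ (Sum.elim (reim x) fun j => star (reim x j))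
  suffices h : Algebra.adjoin ℂ (Set.range x ∪ star (Set.range x)) ≤ φ.range by
    rw [← SetLike.mem_coe, ← StarSubalgebra.coe_toSubalgebra,
      StarAlgebra.adjoin_toSubalgebra] at ha
    exact h ha
  refine Algebra.adjoin_le ?_
  rintro _ (⟨i, rfl⟩ | ⟨i, hi⟩)
  · refine ⟨FreeAlgebra.ι ℂ (Sum.inl (Sum.inl i))
      + Complex.I • FreeAlgebra.ι ℂ (Sum.inl (Sum.inr i)), ?_⟩
    simpa [φ] using reim_inl_add_I_smul_reim_inr x i
  · obtain rfl : _ = star (x i) := by rw [hi, star_star]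
    refine ⟨FreeAlgebra.ι ℂ (Sum.inl (Sum.inl i))
      - Complex.I • FreeAlgebra.ι ℂ (Sum.inl (Sum.inr i)), ?_⟩
    simpa [φ] using reim_inl_sub_I_smul_reim_inr x i

theorem exists_evalPoly_reim_near {ι : Type*} {x : ι → A} (hgen : cstar (Set.range x) = ⊤)
    (a : A) {δ : ℝ} (hδ : 0 < δ) : ∃ Q : StarPoly (ι ⊕ ι), ‖a - evalPoly Q (reim x)‖ < δ := by
  have ha : a ∈ closure (StarAlgebra.adjoin ℂ (Set.range x) : Set A) := by
    rw [← StarSubalgebra.topologicalClosure_coe, ← cstar, hgen]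
    trivial
  obtain ⟨b, hb, hab⟩ := Metric.mem_closure_iff.1 ha δ hδ
  obtain ⟨Q, rfl⟩ := exists_evalPoly_reim_eq_of_mem_adjoin hb
  exact ⟨Q, by rwa [← dist_eq_norm]⟩

theorem Ktop2_eq_zero_of_generates {κ κ' ι : Type*} [Fintype κ] [Fintype κ'] [IsEmpty κ']
    [Fintype ι] {x : κ → A} (z : κ' → A) (hgen : cstar (Set.range x) = ⊤)
    (h : Ktop2 x z = 0) (x' : ι → A) : Ktop2 x' x = 0 :=
  le_antisymm (h ▸ Ktop2sa_le_of_approx (reim x') (reim x) (reim z)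
      fun _ _ hδ => exists_evalPoly_reim_near hgen _ hδ)
    (Ktop2sa_nonneg _ _)

theorem infMul_nonneg (t : EReal) : 0 ≤ infMul t := by
  unfold infMul
  split_ifs
  exacts [le_rfl, le_top]

theorem Ktop3_eq_zero_of_forall_exists {G : Set A}
    (h : ∀ (n : ℕ) (x : Fin n → A), (∀ i, x i ∈ G) →
      ∃ (t : ℕ) (y : Fin t → A), (∀ j, y j ∈ G) ∧ Ktop2 x y = 0) :
    Ktop3 G = 0 := by
  refine le_antisymm (iSup_le fun n => iSup₂_le fun x hx => ?_) ?_
  · obtain ⟨t, y, hy, hxy⟩ := h n x hx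
    exact iInf₂_le_of_le t y (iInf_le_of_le hy (by simp [infMul, hxy]))
  · exact le_iSup₂_of_le 0 Fin.elim0 (le_iSup_of_le (fun i => i.elim0)
      (le_iInf₂ fun t y => le_iInf fun _ => infMul_nonneg _))

end OrbitDimension

end OrbitDim

open OrbitDim Set

theorem stmt6_general {A : Type*} [CStarAlgebra A] (n : ℕ) (x : Fin n → A)
    (hgen : cstar (Set.range x) = ⊤)
    (h : Ktop2 x (Fin.elim0 : Fin 0 → A) = 0) :
    Ktop3 (Set.univ : Set A) = 0 :=
  Ktop3_eq_zero_of_forall_exists fun _ x' _ =>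
    ⟨n, x, fun _ => Set.mem_univ _, Ktop2_eq_zero_of_generates _ hgen h x'⟩

/-- If `A = C*(x₁,…,xₙ)` is a finitely generated unital MF C*-algebra
and `K_top^{(2)}(x₁,…,xₙ) = 0`, then `K_top^{(3)}(A) = 0`. -/
theorem stmt6 {A : Type*} [CStarAlgebra A] (n : ℕ) (x : Fin n → A)
    (hgen : cstar (Set.range x) = ⊤) (hMF : IsMFTuple x)
    (h : Ktop2 x (Fin.elim0 : Fin 0 → A) = 0) :
    Ktop3 (Set.univ : Set A) = 0 :=
  stmt6_general n x hgen h
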